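/- Let r, s, d, v > 0 and f ∈ (0,1]. Define Z(l) = v·s·(1 − (s·f·Π₀(r, s·f, d)) / ((s·f + l·d)·Π₀(r, s·f + l·d, d))) for l ∈ ℕ, l ≥ 1, where Π₀(r,σ,d) = (∑_{k=0}^∞ r^k / ∏_{m=1}^{k} (σ + m·d))^{-1}. Then Z is strictly monotone increasing in l, and 0 < Z(l) < v·s for every l ≥ 1. -/

import Mathlib

open scoped BigOperators

/-- Term of the normalizing series of the birth-death queue:
`r^l / ∏_{m=1}^{l} (s + m·d)`, empty product = 1. -/
noncomputable def qterm (r s d : ℝ) (l : ℕ) : ℝ :=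
  r ^ l / ∏ m ∈ Finset.Icc 1 l, (s + (m : ℝ) * d)

/-- Stationary empty-queue probability `Π₀(r,s,d)`. -/
noncomputable def Pi0 (r s d : ℝ) : ℝ := (∑' l : ℕ, qterm r s d l)⁻¹

/-!
Dividing the series by `σ` gives `σ · Π₀(r, σ, d) = (∑ₗ rˡ / (σ ∏ₘ₌₁ˡ (σ + m d)))⁻¹`. Every term of
this series is antitone in `σ > 0` and the term `l = 0`, namely `1/σ`, is strictly antitone, so
`σ ↦ σ Π₀(r, σ, d)` is strictly increasing and positive. Since `Z(l) = v s (1 - g(s f) / g(s f + l d))`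
with `g(σ) = σ Π₀(r, σ, d)`, the ratio decreases strictly from its value `1` at `l = 0`, which gives
both the monotonicity of `Z` and the bounds `0 < Z(l) < v s`.
-/

open Finset

section Series

variable {r σ d : ℝ}

lemma prod_Icc_add_mul_pos (hσ : 0 < σ) (hd : 0 ≤ d) (l : ℕ) :
    0 < ∏ m ∈ Icc 1 l, (σ + (m : ℝ) * d) :=
  prod_pos fun m _ => by positivity

lemma pow_mul_factorial_le_prod_Icc_add_mul (hσ : 0 ≤ σ) (hd : 0 ≤ d) (l : ℕ) :
    d ^ l * (l.factorial : ℝ) ≤ ∏ m ∈ Icc 1 l, (σ + (m : ℝ) * d) := by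
  have h_factor : ∏ m ∈ Icc 1 l, ((m : ℝ) * d) = d ^ l * (l.factorial : ℝ) := by
    rw [prod_mul_distrib, prod_const, Nat.card_Icc, Nat.add_sub_cancel, ← Nat.cast_prod,
      ← Ico_add_one_right_eq_Icc, prod_Ico_id_eq_factorial, mul_comm]
  rw [← h_factor]
  exact prod_le_prod (fun m _ => by positivity) fun m _ => by linarith

@[simp]
lemma qterm_zero : qterm r σ d 0 = 1 := by
  simp [qterm]

lemma qterm_nonneg (hr : 0 ≤ r) (hσ : 0 < σ) (hd : 0 ≤ d) (l : ℕ) : 0 ≤ qterm r σ d l :=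
  div_nonneg (pow_nonneg hr l) (prod_Icc_add_mul_pos hσ hd l).le

lemma summable_qterm (r : ℝ) (hσ : 0 < σ) (hd : 0 < d) : Summable (qterm r σ d) := by
  refine (Real.summable_pow_div_factorial (|r| / d)).of_norm_bounded fun l => ?_
  have hprod := prod_Icc_add_mul_pos hσ hd.le l
  rw [Real.norm_eq_abs, qterm, abs_div, abs_pow, abs_of_pos hprod, div_pow, div_div]
  gcongr
  exact pow_mul_factorial_le_prod_Icc_add_mul hσ.le hd.le l

lemma qterm_div_le_qterm_div (hr : 0 ≤ r) (hd : 0 ≤ d) {σ₁ σ₂ : ℝ} (hσ₁ : 0 < σ₁)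
    (hσ : σ₁ ≤ σ₂) (l : ℕ) : qterm r σ₂ d l / σ₂ ≤ qterm r σ₁ d l / σ₁ := by
  have hσ₂ : 0 < σ₂ := hσ₁.trans_le hσ
  rw [qterm, qterm, div_div, div_div]
  gcongr

lemma mul_Pi0_eq_inv_tsum_qterm_div (r σ d : ℝ) :
    σ * Pi0 r σ d = (∑' l, qterm r σ d l / σ)⁻¹ := by
  rw [Pi0, tsum_div_const, inv_div, div_eq_mul_inv]

lemma mul_Pi0_pos (hr : 0 ≤ r) (hσ : 0 < σ) (hd : 0 < d) : 0 < σ * Pi0 r σ d := by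
  have hsum : 0 < ∑' l, qterm r σ d l :=
    (summable_qterm r hσ hd).tsum_pos (qterm_nonneg hr hσ hd.le) 0 (by simp)
  exact mul_pos hσ (inv_pos.mpr hsum)

lemma strictMonoOn_mul_Pi0 (hr : 0 ≤ r) (hd : 0 < d) :
    StrictMonoOn (fun σ => σ * Pi0 r σ d) (Set.Ioi 0) := by
  intro σ₁ hσ₁ σ₂ hσ₂ hσ
  have h_lt : ∑' l, qterm r σ₂ d l / σ₂ < ∑' l, qterm r σ₁ d l / σ₁ :=
    Summable.tsum_lt_tsum_of_nonneg (i := 0)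
      (fun l => div_nonneg (qterm_nonneg hr hσ₂ hd.le l) hσ₂.le)
      (qterm_div_le_qterm_div hr hd.le hσ₁ hσ.le) (by simpa using one_div_lt_one_div_of_lt hσ₁ hσ)
      ((summable_qterm r hσ₁ hd).div_const σ₁)
  have h_pos : 0 < ∑' l, qterm r σ₂ d l / σ₂ := by
    simpa [mul_Pi0_eq_inv_tsum_qterm_div] using mul_Pi0_pos hr hσ₂ hd
  simp only [mul_Pi0_eq_inv_tsum_qterm_div]
  exact inv_strictAnti₀ h_pos h_lt

end Series

lemma strictAnti_div_comp_add_mul {g : ℝ → ℝ} (hg : StrictMonoOn g (Set.Ioi 0))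
    (hg_pos : ∀ σ, 0 < σ → 0 < g σ) {a d : ℝ} (ha : 0 < a) (hd : 0 < d) :
    StrictAnti fun l : ℕ => g a / g (a + l * d) := by
  have hσ_pos (l : ℕ) : 0 < a + l * d := by positivity
  refine strictAnti_nat_of_succ_lt fun l => ?_
  apply div_lt_div_of_pos_left (hg_pos a ha) (hg_pos _ (hσ_pos l))
  exact hg (hσ_pos l) (hσ_pos (l + 1)) (by push_cast; linarith)

theorem stmt8 (r s d v f : ℝ) (hr : 0 < r) (hs : 0 < s) (hd : 0 < d) (hv : 0 < v)
    (hf : f ∈ Set.Ioc (0 : ℝ) 1) :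
    let Z : ℕ → ℝ := fun l =>
      v * s * (1 - (s * f * Pi0 r (s * f) d)
        / ((s * f + (l : ℝ) * d) * Pi0 r (s * f + (l : ℝ) * d) d))
    (∀ l k : ℕ, 1 ≤ l → l < k → Z l < Z k) ∧
    (∀ l : ℕ, 1 ≤ l → 0 < Z l ∧ Z l < v * s) := by
  intro Z
  have hsf : 0 < s * f := mul_pos hs hf.1
  have hvs : 0 < v * s := mul_pos hv hs
  set ratio : ℕ → ℝ := fun l => s * f * Pi0 r (s * f) d
    / ((s * f + (l : ℝ) * d) * Pi0 r (s * f + (l : ℝ) * d) d) with h_ratio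
  have h_anti : StrictAnti ratio := strictAnti_div_comp_add_mul (strictMonoOn_mul_Pi0 hr.le hd)
    (fun σ hσ => mul_Pi0_pos hr.le hσ hd) hsf hd
  have h_ratio_zero : ratio 0 = 1 := by
    simp only [h_ratio, Nat.cast_zero, zero_mul, add_zero]
    exact div_self (mul_Pi0_pos hr.le hsf hd).ne'
  have h_ratio_pos (l : ℕ) : 0 < ratio l :=
    div_pos (mul_Pi0_pos hr.le hsf hd) (mul_Pi0_pos hr.le (by positivity) hd)
  refine ⟨fun l k _ hlk => ?_, fun l hl => ⟨?_, ?_⟩⟩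
  · have := h_anti hlk
    show v * s * (1 - ratio l) < v * s * (1 - ratio k)
    gcongr
  · have := h_anti (show 0 < l by omega)
    exact mul_pos hvs (by linarith)
  · show v * s * (1 - ratio l) < v * s
    linarith [mul_pos hvs (h_ratio_pos l)]
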